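/- Let 𝒞 > 0, B ∈ ℝ, and let G: [𝒞/2, ∞) → ℝ be locally absolutely continuous with G'(t) ≥ 𝒞²B/(4t³) for almost every t ≥ 𝒞/2. If in addition lim_{t→∞} G(t) = 0 and G(𝒞/2) = −A with B ≥ (1 − 2𝒞α)A for some α ∈ (−(2𝒞)^{-1}, (2𝒞)^{-1}], then A ≥ 0 and B ≥ 0, and hence G is nondecreasing on [𝒞/2, ∞). -/

import Mathlib

open MeasureTheory

lemma aux_integral (C B : ℝ) (hC : 0 < C) {a t : ℝ} (ha : C / 2 ≤ a) (hat : a ≤ t) :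
    ∫ s in a..t, C ^ 2 * B / (4 * s ^ 3) =
      C ^ 2 * B / (8 * a ^ 2) - C ^ 2 * B / (8 * t ^ 2) := by
  have ha0 : 0 < a := lt_of_lt_of_le (by linarith) ha
  have key : ∀ s ∈ Set.uIcc a t,
      HasDerivAt (fun s : ℝ => -(C ^ 2 * B / 8) * (s ^ 2)⁻¹) (C ^ 2 * B / (4 * s ^ 3)) s := by
    intro s hs
    rw [Set.uIcc_of_le hat] at hs
    have hs0 : s ≠ 0 := ne_of_gt (lt_of_lt_of_le ha0 hs.1)
    have h1 : HasDerivAt (fun s : ℝ => s ^ 2) (2 * s) s := by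
      simpa using hasDerivAt_pow 2 s
    have h2 := (h1.inv (pow_ne_zero 2 hs0)).const_mul (-(C ^ 2 * B / 8))
    refine h2.congr_deriv ?_
    field_simp
    ring
  have hcont : IntervalIntegrable (fun s => C ^ 2 * B / (4 * s ^ 3)) volume a t := by
    apply ContinuousOn.intervalIntegrable
    apply ContinuousOn.div continuousOn_const
    · fun_prop
    · intro s hs
      rw [Set.uIcc_of_le hat] at hs
      have : 0 < s := lt_of_lt_of_le ha0 hs.1
      positivity
  have := intervalIntegral.integral_eq_sub_of_hasDerivAt key hcont
  rw [this]
  have ht0 : (0:ℝ) < t := lt_of_lt_of_le ha0 hat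
  field_simp
  ring

lemma aux_mono (C B : ℝ) (hC : 0 < C) (g : ℝ → ℝ)
    (hg : ∀ᵐ t, C / 2 ≤ t → C ^ 2 * B / (4 * t ^ 3) ≤ g t)
    {a t : ℝ} (ha : C / 2 ≤ a) (hat : a ≤ t)
    (hgi : IntervalIntegrable g volume a t) :
    ∫ s in a..t, C ^ 2 * B / (4 * s ^ 3) ≤ ∫ s in a..t, g s := by
  have ha0 : 0 < a := lt_of_lt_of_le (by linarith) ha
  have hcont : IntervalIntegrable (fun s => C ^ 2 * B / (4 * s ^ 3)) volume a t := by
    apply ContinuousOn.intervalIntegrable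
    apply ContinuousOn.div continuousOn_const
    · fun_prop
    · intro s hs
      rw [Set.uIcc_of_le hat] at hs
      have : 0 < s := lt_of_lt_of_le ha0 hs.1
      positivity
  apply intervalIntegral.integral_mono_ae_restrict hat hcont hgi
  have hmem : ∀ᵐ x ∂(volume.restrict (Set.Icc a t)), x ∈ Set.Icc a t :=
    ae_restrict_mem measurableSet_Icc
  have hg' : ∀ᵐ x ∂(volume.restrict (Set.Icc a t)), C / 2 ≤ x → C ^ 2 * B / (4 * x ^ 3) ≤ g x :=
    hg.filter_mono (ae_mono Measure.restrict_le_self)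
  filter_upwards [hmem, hg'] with x hx h
  exact h (le_trans ha hx.1)

/-- Let `𝒞 > 0`, `B ∈ ℝ`, and let `G : [𝒞/2, ∞) → ℝ` be locally absolutely
continuous (encoded by an integral representation `G t = G(𝒞/2) + ∫_{𝒞/2}^t g`) with
`G'(t) = g(t) ≥ 𝒞²B/(4t³)` for a.e. `t ≥ 𝒞/2`.  If `G(t) → 0` as `t → ∞`, `G(𝒞/2) = −A`,
and `B ≥ (1 − 2𝒞α)A` for some `α ∈ (−(2𝒞)⁻¹, (2𝒞)⁻¹]`, then `A ≥ 0` and `B ≥ 0`, and hence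
`G` is nondecreasing on `[𝒞/2, ∞)`. -/
theorem monotonicity_from_derivative_lower_bound
    (C A B α : ℝ) (hC : 0 < C)
    (hα : α ∈ Set.Ioc (-(2 * C)⁻¹) ((2 * C)⁻¹))
    (G g : ℝ → ℝ)
    (hint : ∀ t, C / 2 ≤ t → IntervalIntegrable g volume (C / 2) t)
    (hrep : ∀ t, C / 2 ≤ t → G t = G (C / 2) + ∫ s in (C / 2)..t, g s)
    (hg : ∀ᵐ t, C / 2 ≤ t → C ^ 2 * B / (4 * t ^ 3) ≤ g t)
    (hlim : Filter.Tendsto G Filter.atTop (nhds 0))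
    (hGA : G (C / 2) = -A)
    (hBA : (1 - 2 * C * α) * A ≤ B) :
    0 ≤ A ∧ 0 ≤ B ∧ MonotoneOn G (Set.Ici (C / 2)) := by
  have hC2 : (0:ℝ) < 2 * C := by linarith
  have hα1 : 2 * C * α ≤ 1 := by
    have := mul_le_mul_of_nonneg_left hα.2 hC2.le
    rwa [mul_inv_cancel₀ hC2.ne'] at this
  have hα2 : -1 < 2 * C * α := by
    have := mul_lt_mul_of_pos_left hα.1 hC2
    rwa [mul_neg, mul_inv_cancel₀ hC2.ne'] at this
  -- lower bound for G
  have hlow : ∀ t, C / 2 ≤ t →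
      C ^ 2 * B / (8 * (C / 2) ^ 2) - C ^ 2 * B / (8 * t ^ 2) - A ≤ G t := by
    intro t ht
    have h := aux_mono C B hC g hg le_rfl ht (hint t ht)
    rw [aux_integral C B hC le_rfl ht] at h
    rw [hrep t ht, hGA]
    linarith
  have hval : C ^ 2 * B / (8 * (C / 2) ^ 2) = B / 2 := by
    field_simp; ring
  -- limit comparison
  have h2 : Filter.Tendsto (fun t : ℝ => C ^ 2 * B / (8 * t ^ 2)) Filter.atTop (nhds 0) := by
    have ht : Filter.Tendsto (fun t : ℝ => 8 * t ^ 2) Filter.atTop Filter.atTop :=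
      (Filter.tendsto_pow_atTop (by norm_num)).const_mul_atTop (by norm_num)
    have := ht.inv_tendsto_atTop.const_mul (C ^ 2 * B)
    simpa [div_eq_mul_inv] using this
  have hlim2 : Filter.Tendsto
      (fun t : ℝ => C ^ 2 * B / (8 * (C / 2) ^ 2) - C ^ 2 * B / (8 * t ^ 2) - A)
      Filter.atTop (nhds (C ^ 2 * B / (8 * (C / 2) ^ 2) - 0 - A)) :=
    (tendsto_const_nhds.sub h2).sub tendsto_const_nhds
  have hkey : C ^ 2 * B / (8 * (C / 2) ^ 2) - 0 - A ≤ 0 := by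
    refine le_of_tendsto_of_tendsto hlim2 hlim ?_
    filter_upwards [Filter.eventually_ge_atTop (C / 2)] with t ht using hlow t ht
  rw [hval] at hkey
  have hB2A : B ≤ 2 * A := by linarith
  have hA : 0 ≤ A := by nlinarith
  have hB : 0 ≤ B := le_trans (by nlinarith) hBA
  refine ⟨hA, hB, ?_⟩
  intro s hs t ht hst
  simp only [Set.mem_Ici] at hs ht
  have hseg : IntervalIntegrable g volume s t := (hint s hs).symm.trans (hint t ht)
  have h5 := aux_mono C B hC g hg hs hst hseg
  rw [aux_integral C B hC hs hst] at h5
  have hs0 : (0:ℝ) < s := lt_of_lt_of_le (by linarith) hs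
  have ht0 : (0:ℝ) < t := lt_of_lt_of_le hs0 hst
  have h6 : C ^ 2 * B / (8 * t ^ 2) ≤ C ^ 2 * B / (8 * s ^ 2) := by
    gcongr
  have hadd : (∫ u in (C/2)..s, g u) + ∫ u in s..t, g u = ∫ u in (C/2)..t, g u :=
    intervalIntegral.integral_add_adjacent_intervals (hint s hs) hseg
  rw [hrep s hs, hrep t ht]
  linarith
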